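/- arXiv:2004.01464 — 2 statements merged into one kernel-verified Lean document; each statement's English description precedes it below -/
import Mathlib

section
/- If D' is an open Euclidean disk whose intersection with the open unit disk D is nonempty and which is not contained in the closed unit disk (i.e., it 'sticks out'), then the hyperbolic area of D' ∩ D is infinite. -/
open MeasureTheory

/-- The hyperbolic area of a measurable subset of the open unit disk,
in the Poincaré disk model. -/
noncomputable def areaH (A : Set (EuclideanSpace ℝ (Fin 2))) : ENNReal :=
  ∫⁻ x in A, ENNReal.ofReal (4 / (1 - ‖x‖ ^ 2) ^ 2) ∂volume

/-!
The disk `D'` contains a whole Euclidean neighbourhood `B(p, ε)` of a point `p` of the unit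
circle. Approaching `p` radially, the balls of radius `r/4` centred at `(1 - r) p` lie in
`B(p, ε) ∩ D` for small `r`, have Euclidean area of order `r²` and carry density of order
`r⁻²`, so each has hyperbolic area bounded below by a fixed constant. Along `r = r₀ 2⁻ᵏ`
they are pairwise disjoint, so the hyperbolic area of `D' ∩ D` is infinite.
-/

open Metric ENNReal Function

theorem MeasureTheory.setLIntegral_eq_top_of_pairwise_disjoint {α ι : Type*} [MeasurableSpace α]
    [Countable ι] [Infinite ι] {μ : Measure α} {f : α → ℝ≥0∞} {s : Set α} {B : ι → Set α}
    (hBm : ∀ i, MeasurableSet (B i)) (hB : Pairwise (Disjoint on B)) (hBs : ∀ i, B i ⊆ s)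
    {δ : ℝ≥0∞} (hδ : δ ≠ 0) (hδB : ∀ i, δ ≤ ∫⁻ x in B i, f x ∂μ) :
    ∫⁻ x in s, f x ∂μ = ⊤ := by
  refine top_unique ?_
  calc ⊤ = ∑' _ : ι, δ := (ENNReal.tsum_const_eq_top_of_ne_zero hδ).symm
    _ ≤ ∑' i, ∫⁻ x in B i, f x ∂μ := ENNReal.tsum_le_tsum hδB
    _ = ∫⁻ x in ⋃ i, B i, f x ∂μ := (lintegral_iUnion hBm hB f).symm
    _ ≤ ∫⁻ x in s, f x ∂μ := lintegral_mono_set (Set.iUnion_subset hBs)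

theorem areaH_mono {A A' : Set (EuclideanSpace ℝ (Fin 2))} (h : A ⊆ A') : areaH A ≤ areaH A' :=
  lintegral_mono_set h

section InnerBall

variable {E : Type*} [NormedAddCommGroup E] [NormedSpace ℝ E] {p : E} {r s : ℝ}

def innerBall (p : E) (r : ℝ) : Set E := ball ((1 - r) • p) (r / 4)

theorem norm_sub_smul_self (hp : ‖p‖ = 1) (r s : ℝ) : ‖(1 - r) • p - (1 - s) • p‖ = |s - r| := by
  rw [← sub_smul, norm_smul, hp, mul_one, Real.norm_eq_abs]
  ring_nf

theorem norm_mem_Ioo_of_mem_innerBall (hp : ‖p‖ = 1) (hr : 0 < r) (hr1 : r ≤ 1) {x : E}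
    (hx : x ∈ innerBall p r) : ‖x‖ ∈ Set.Ioo (1 - 2 * r) 1 := by
  rw [innerBall, mem_ball, dist_eq_norm] at hx
  have hc : ‖(1 - r) • p‖ = 1 - r := by
    rw [norm_smul, hp, mul_one, Real.norm_of_nonneg (by linarith)]
  constructor
  · linarith [norm_sub_norm_le ((1 - r) • p) x, norm_sub_rev x ((1 - r) • p)]
  · linarith [norm_le_norm_add_norm_sub' x ((1 - r) • p)]

theorem innerBall_subset_ball_one (hp : ‖p‖ = 1) (hr : 0 < r) (hr1 : r ≤ 1) :
    innerBall p r ⊆ ball 0 1 := fun _ hx ↦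
  mem_ball_zero_iff.2 (norm_mem_Ioo_of_mem_innerBall hp hr hr1 hx).2

theorem innerBall_subset_ball (hp : ‖p‖ = 1) (hr : 0 < r) : innerBall p r ⊆ ball p (2 * r) := by
  intro x hx
  rw [innerBall, mem_ball, dist_eq_norm] at hx
  have hcp : ‖(1 - r) • p - p‖ = r := by simpa [abs_of_pos hr] using norm_sub_smul_self hp r 0
  rw [mem_ball, dist_eq_norm]
  linarith [norm_sub_le_norm_sub_add_norm_sub x ((1 - r) • p) p]

theorem disjoint_innerBall (hp : ‖p‖ = 1) (hs : 0 < s) (hsr : s ≤ r / 2) :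
    Disjoint (innerBall p r) (innerBall p s) := by
  refine ball_disjoint_ball ?_
  rw [dist_eq_norm, norm_sub_smul_self hp, abs_of_neg] <;> linarith

end InnerBall

theorem le_hyperbolic_density {t r : ℝ} (ht : t ∈ Set.Ioo (1 - 2 * r) 1) (ht0 : 0 ≤ t) :
    1 / (4 * r ^ 2) ≤ 4 / (1 - t ^ 2) ^ 2 := by
  obtain ⟨hlo, hhi⟩ := ht
  have hpos : 0 < 1 - t ^ 2 := by nlinarith
  have hlt : 1 - t ^ 2 < 4 * r := by nlinarith
  calc 1 / (4 * r ^ 2) = 4 / (4 * r) ^ 2 := by field_simp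
    _ ≤ 4 / (1 - t ^ 2) ^ 2 := by gcongr

theorem le_setLIntegral_innerBall {p : EuclideanSpace ℝ (Fin 2)} (hp : ‖p‖ = 1) {r : ℝ}
    (hr : 0 < r) (hr1 : r ≤ 1) :
    ENNReal.ofReal (1 / 64) * volume (ball (0 : EuclideanSpace ℝ (Fin 2)) 1) ≤
      ∫⁻ x in innerBall p r, ENNReal.ofReal (4 / (1 - ‖x‖ ^ 2) ^ 2) := by
  calc ENNReal.ofReal (1 / 64) * volume (ball (0 : EuclideanSpace ℝ (Fin 2)) 1)
      = ENNReal.ofReal (1 / (4 * r ^ 2)) * volume (innerBall p r) := by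
        rw [innerBall, Measure.addHaar_ball volume ((1 - r) • p) (by positivity : (0 : ℝ) ≤ r / 4),
          finrank_euclideanSpace_fin, ← mul_assoc, ← ENNReal.ofReal_mul (by positivity),
          show 1 / (4 * r ^ 2) * (r / 4) ^ 2 = 1 / 64 by field_simp; ring]
    _ = ∫⁻ _ in innerBall p r, ENNReal.ofReal (1 / (4 * r ^ 2)) := (setLIntegral_const _ _).symm
    _ ≤ ∫⁻ x in innerBall p r, ENNReal.ofReal (4 / (1 - ‖x‖ ^ 2) ^ 2) :=
        setLIntegral_mono (by fun_prop) fun x hx ↦ ENNReal.ofReal_le_ofReal <|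
          le_hyperbolic_density (norm_mem_Ioo_of_mem_innerBall hp hr hr1 hx) (norm_nonneg x)

theorem areaH_ball_inter_ball_one_eq_top {p : EuclideanSpace ℝ (Fin 2)} (hp : ‖p‖ = 1) {ε : ℝ}
    (hε : 0 < ε) : areaH (ball p ε ∩ ball 0 1) = ⊤ := by
  set r : ℕ → ℝ := fun k ↦ min ε 1 / 2 ^ (k + 1)
  have hr : ∀ k, 0 < r k := fun k ↦ by positivity
  have hr_le : ∀ k, 2 * r k ≤ min ε 1 := fun k ↦
    calc 2 * r k = min ε 1 / 2 ^ k := by simp only [r, pow_succ]; field_simp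
      _ ≤ min ε 1 := div_le_self (by positivity) (one_le_pow₀ one_le_two)
  have hr_anti : ∀ ⦃k l⦄, k < l → r l ≤ r k / 2 := fun k l hkl ↦ by
    rw [div_div, ← pow_succ]
    exact div_le_div_of_nonneg_left (by positivity) (by positivity)
      (pow_le_pow_right₀ one_le_two (by omega))
  have hr1 : ∀ k, r k ≤ 1 := fun k ↦ by linarith [hr_le k, min_le_right ε 1, hr k]
  have hdisj : Pairwise (Disjoint on fun k ↦ innerBall p (r k)) :=
    (pairwise_disjoint_on _).2 fun k l hkl ↦ disjoint_innerBall hp (hr l) (hr_anti hkl)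
  have hsub : ∀ k, innerBall p (r k) ⊆ ball p ε ∩ ball 0 1 := fun k ↦
    Set.subset_inter
      ((innerBall_subset_ball hp (hr k)).trans
        (ball_subset_ball ((hr_le k).trans (min_le_left _ _))))
      (innerBall_subset_ball_one hp (hr k) (hr1 k))
  refine setLIntegral_eq_top_of_pairwise_disjoint (fun _ ↦ measurableSet_ball) hdisj hsub ?_
    fun k ↦ le_setLIntegral_innerBall hp (hr k) (hr1 k)
  exact mul_ne_zero (by norm_num) (measure_ball_pos _ _ one_pos).ne'

theorem stmt3_general (c : EuclideanSpace ℝ (Fin 2)) (ρ : ℝ)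
    (hmeet : (Metric.ball c ρ ∩ Metric.ball (0 : EuclideanSpace ℝ (Fin 2)) 1).Nonempty)
    (hout : ¬ Metric.ball c ρ ⊆ Metric.closedBall (0 : EuclideanSpace ℝ (Fin 2)) 1) :
    areaH (Metric.ball c ρ ∩ Metric.ball (0 : EuclideanSpace ℝ (Fin 2)) 1) = ⊤ := by
  obtain ⟨a, hac, ha⟩ := hmeet
  obtain ⟨b, hbc, hb⟩ := Set.not_subset.1 hout
  rw [mem_ball_zero_iff] at ha
  rw [mem_closedBall_zero_iff, not_le] at hb
  obtain ⟨p, hpc, hp⟩ : ∃ p ∈ ball c ρ, ‖p‖ = 1 :=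
    (convex_ball c ρ).isPreconnected.intermediate_value hac hbc continuous_norm.continuousOn
      ⟨ha.le, hb.le⟩
  obtain ⟨ε, hε, hεc⟩ := isOpen_iff.1 isOpen_ball p hpc
  exact top_unique <| (areaH_ball_inter_ball_one_eq_top hp hε).symm.le.trans
    (areaH_mono (Set.inter_subset_inter_left _ hεc))

/-- An open Euclidean disk that meets the open unit disk but "sticks out" of the
closed unit disk has infinite hyperbolic area inside the unit disk. -/
theorem stmt3 (c : EuclideanSpace ℝ (Fin 2)) (ρ : ℝ) (hρ : 0 < ρ)
    (hmeet : (Metric.ball c ρ ∩ Metric.ball (0 : EuclideanSpace ℝ (Fin 2)) 1).Nonempty)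
    (hout : ¬ Metric.ball c ρ ⊆ Metric.closedBall (0 : EuclideanSpace ℝ (Fin 2)) 1) :
    areaH (Metric.ball c ρ ∩ Metric.ball (0 : EuclideanSpace ℝ (Fin 2)) 1) = ⊤ :=
  stmt3_general c ρ hmeet hout
end

section
/- Suppose A ⊆ D and δ > 0 with A_δ := ∪_{a∈A} B_ℝ²(a,δ) ⊆ D, and suppose every axis-parallel square of side length δ/1000 (from the standard dissection of ℝ²) contained in A_δ contains at least one point of the locally finite set Z ⊆ D. Then for every u ∈ A: (i) there exists z ∈ Z with ‖u−z‖ < δ, and (ii) the hyperbolic nearest-point distance satisfies inf_{z∈Z} dist_H(u,z) = inf_{z∈Z, ‖u−z‖<δ} dist_H(u,z). -/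
noncomputable def distH (u v : EuclideanSpace ℝ (Fin 2)) : ℝ :=
  2 * Real.arsinh (‖u - v‖ / Real.sqrt ((1 - ‖u‖ ^ 2) * (1 - ‖v‖ ^ 2)))

/-- The axis-parallel square with corner `(m·s, n·s)` and side length `s` from the
standard dissection of the plane. -/
def square (s : ℝ) (m n : ℤ) : Set (EuclideanSpace ℝ (Fin 2)) :=
  {x | (m : ℝ) * s ≤ x 0 ∧ x 0 ≤ ((m : ℝ) + 1) * s ∧
       (n : ℝ) * s ≤ x 1 ∧ x 1 ≤ ((n : ℝ) + 1) * s}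

/-!
Part (i) holds because the square of the dissection containing `u` lies in `B(u, δ)`.
For part (ii), a point `z` with `δ ≤ ‖u - z‖` bounds a hyperbolic disk around `u` that is a
Euclidean disk containing both `u` and `z`, hence of radius at least `δ / 2`. Shrinking it
towards `u` gives a disk of radius `δ / 4` inside it and within `δ / 4` of `u`; the square of
the dissection containing its centre lies in `B(u, δ)`, so carries a point `z'` of `Z`, which
is hyperbolically at least as close to `u` as `z` and Euclidean-closer than `δ`.
-/

open Metric Set

local notation "E2" => EuclideanSpace ℝ (Fin 2)

lemma csInf_image_eq_of_forall_exists_le {α β : Type*} [ConditionallyCompleteLattice β]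
    {f : α → β} {s t : Set α} (hts : t ⊆ s) (hf : BddBelow (f '' s)) (ht : t.Nonempty)
    (h : ∀ x ∈ s, ∃ y ∈ t, f y ≤ f x) :
    sInf (f '' s) = sInf (f '' t) := by
  refine le_antisymm (csInf_le_csInf hf (ht.image f) (image_mono hts)) ?_
  refine le_csInf ((ht.mono hts).image f) (forall_mem_image.2 fun x hx => ?_)
  obtain ⟨y, hy, hyx⟩ := h x hx
  exact (csInf_le (hf.mono (image_mono hts)) (mem_image_of_mem f hy)).trans hyx

lemma exists_closedBall_subset_closedBall_dist_le {E : Type*} [NormedAddCommGroup E]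
    [NormedSpace ℝ E] {u c : E} {r ρ : ℝ} (hr : 0 < r) (hrρ : r ≤ ρ) (hu : u ∈ closedBall c ρ) :
    ∃ p, dist u p ≤ r ∧ closedBall p r ⊆ closedBall c ρ := by
  have hρ : 0 < ρ := hr.trans_le hrρ
  have huc : dist c u ≤ ρ := mem_closedBall'.1 hu
  have ht : 0 ≤ (ρ - r) / ρ := div_nonneg (by linarith) hρ.le
  refine ⟨AffineMap.homothety c ((ρ - r) / ρ) u, ?_, closedBall_subset_closedBall' ?_⟩
  · rw [dist_comm, dist_homothety_self, Real.norm_eq_abs,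
      show 1 - (ρ - r) / ρ = r / ρ by field_simp; ring, abs_of_pos (div_pos hr hρ)]
    calc r / ρ * dist c u ≤ r / ρ * ρ := by gcongr
      _ = r := div_mul_cancel₀ r hρ.ne'
  · rw [dist_homothety_center, Real.norm_eq_abs, abs_of_nonneg ht]
    calc r + (ρ - r) / ρ * dist c u ≤ r + (ρ - r) / ρ * ρ := by gcongr
      _ = ρ := by field_simp; ring

/-- Completing the square: `‖u - q‖² ≤ k (1 - ‖q‖²)` describes a closed ball centred at
`u / (1 + k)`. -/
lemma norm_sub_sq_le_iff_dist_sq_le {E : Type*} [NormedAddCommGroup E] [InnerProductSpace ℝ E]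
    (u q : E) {k : ℝ} (hk : 0 < 1 + k) :
    ‖u - q‖ ^ 2 ≤ k * (1 - ‖q‖ ^ 2) ↔
      dist q ((1 + k)⁻¹ • u) ^ 2 ≤ k * (1 + k - ‖u‖ ^ 2) / (1 + k) ^ 2 := by
  have hscale : (1 + k) ^ 2 * dist q ((1 + k)⁻¹ • u) ^ 2 = ‖(1 + k) • q - u‖ ^ 2 := by
    rw [dist_eq_norm, ← sq_abs (1 + k), ← mul_pow, ← Real.norm_eq_abs, ← norm_smul, smul_sub,
      smul_inv_smul₀ hk.ne']
  have hexpand : ‖(1 + k) • q - u‖ ^ 2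
      = (1 + k) ^ 2 * ‖q‖ ^ 2 - 2 * (1 + k) * inner ℝ q u + ‖u‖ ^ 2 := by
    rw [norm_sub_sq_real, norm_smul, real_inner_smul_left, Real.norm_eq_abs, mul_pow, sq_abs]
    ring
  have hexpand' : ‖u - q‖ ^ 2 = ‖u‖ ^ 2 - 2 * inner ℝ q u + ‖q‖ ^ 2 := by
    rw [norm_sub_sq_real, real_inner_comm]
  rw [le_div_iff₀ (by positivity), mul_comm (dist _ _ ^ 2), hscale, hexpand, hexpand']
  constructor <;> intro h <;> nlinarith

lemma distH_nonneg (u v : E2) : 0 ≤ distH u v := by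
  unfold distH
  have : 0 ≤ Real.arsinh (‖u - v‖ / √((1 - ‖u‖ ^ 2) * (1 - ‖v‖ ^ 2))) :=
    Real.arsinh_nonneg_iff.2 (by positivity)
  linarith

lemma distH_le_distH {u v w : E2} (hu : ‖u‖ < 1) (hv : ‖v‖ < 1) (hw : ‖w‖ < 1)
    (h : ‖u - v‖ ^ 2 / (1 - ‖v‖ ^ 2) ≤ ‖u - w‖ ^ 2 / (1 - ‖w‖ ^ 2)) :
    distH u v ≤ distH u w := by
  have hu' : 0 < 1 - ‖u‖ ^ 2 := by nlinarith [norm_nonneg u]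
  have hv' : 0 < 1 - ‖v‖ ^ 2 := by nlinarith [norm_nonneg v]
  have hw' : 0 < 1 - ‖w‖ ^ 2 := by nlinarith [norm_nonneg w]
  have hsq : ∀ x : E2, 0 < 1 - ‖x‖ ^ 2 →
      (‖u - x‖ / √((1 - ‖u‖ ^ 2) * (1 - ‖x‖ ^ 2))) ^ 2
        = ‖u - x‖ ^ 2 / (1 - ‖x‖ ^ 2) / (1 - ‖u‖ ^ 2) := fun x hx => by
    rw [div_pow, Real.sq_sqrt (by positivity), div_div, mul_comm (1 - ‖x‖ ^ 2)]
  unfold distH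
  gcongr 2 * ?_
  rw [Real.arsinh_le_arsinh, ← pow_le_pow_iff_left₀ (by positivity) (by positivity) two_ne_zero,
    hsq v hv', hsq w hw']
  gcongr

/-- The hyperbolic disk around `u` through `z` is a Euclidean closed ball. -/
lemma exists_closedBall_distH_le {u z : E2} (hu : ‖u‖ < 1) (hz : ‖z‖ < 1) :
    ∃ c ρ, u ∈ closedBall c ρ ∧ z ∈ closedBall c ρ ∧
      ∀ q ∈ closedBall c ρ, ‖q‖ < 1 → distH u q ≤ distH u z := by
  have hu' : 0 < 1 - ‖u‖ ^ 2 := by nlinarith [norm_nonneg u]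
  have hz' : 0 < 1 - ‖z‖ ^ 2 := by nlinarith [norm_nonneg z]
  set k := ‖u - z‖ ^ 2 / (1 - ‖z‖ ^ 2)
  have hk : 0 ≤ k := by positivity
  set R := k * (1 + k - ‖u‖ ^ 2) / (1 + k) ^ 2
  have hR : 0 ≤ R := by
    have : 0 ≤ 1 + k - ‖u‖ ^ 2 := by linarith
    positivity
  have mem_iff : ∀ q, q ∈ closedBall ((1 + k)⁻¹ • u) √R ↔ ‖u - q‖ ^ 2 ≤ k * (1 - ‖q‖ ^ 2) :=
    fun q => by
      rw [mem_closedBall, Real.le_sqrt dist_nonneg hR,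
        norm_sub_sq_le_iff_dist_sq_le u q (by linarith)]
  refine ⟨_, _, (mem_iff u).2 ?_, (mem_iff z).2 (div_mul_cancel₀ _ hz'.ne').ge,
    fun q hq hq1 => distH_le_distH hu hq1 hz ?_⟩
  · rw [sub_self, norm_zero, zero_pow two_ne_zero]
    exact mul_nonneg hk hu'.le
  · have hq' : 0 < 1 - ‖q‖ ^ 2 := by nlinarith [norm_nonneg q]
    exact (div_le_iff₀ hq').2 ((mem_iff q).1 hq)

lemma mem_square_floor {s : ℝ} (hs : 0 < s) (p : E2) :
    p ∈ square s ⌊p 0 / s⌋ ⌊p 1 / s⌋ :=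
  ⟨(le_div_iff₀ hs).1 (Int.floor_le _), ((div_lt_iff₀ hs).1 (Int.lt_floor_add_one _)).le,
    (le_div_iff₀ hs).1 (Int.floor_le _), ((div_lt_iff₀ hs).1 (Int.lt_floor_add_one _)).le⟩

lemma dist_le_of_mem_square {s : ℝ} {m n : ℤ} {p q : E2}
    (hp : p ∈ square s m n) (hq : q ∈ square s m n) : dist p q ≤ √2 * s := by
  obtain ⟨hp0, hp0', hp1, hp1'⟩ := hp
  obtain ⟨hq0, hq0', hq1, hq1'⟩ := hq
  have hs : 0 ≤ s := by linarith
  have hsq : ∀ a b : ℝ, a - b ≤ s → b - a ≤ s → dist a b ^ 2 ≤ s ^ 2 := fun a b h₁ h₂ => by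
    rw [Real.dist_eq, sq_abs]
    nlinarith
  rw [EuclideanSpace.dist_eq, Fin.sum_univ_two, ← Real.sqrt_sq hs, ← Real.sqrt_mul zero_le_two]
  gcongr
  linarith [hsq (p 0) (q 0) (by linarith) (by linarith), hsq (p 1) (q 1) (by linarith) (by linarith)]

lemma exists_mem_dist_le_of_forall_square {Z S : Set E2} {s : ℝ} (hs : 0 < s)
    (hsq : ∀ m n : ℤ, square s m n ⊆ S → (Z ∩ square s m n).Nonempty) {p : E2}
    (hp : closedBall p (√2 * s) ⊆ S) : ∃ z ∈ Z, dist p z ≤ √2 * s := by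
  have hmem := mem_square_floor hs p
  obtain ⟨z, hzZ, hz⟩ :=
    hsq _ _ fun q hq => hp (mem_closedBall'.2 (dist_le_of_mem_square hmem hq))
  exact ⟨z, hzZ, dist_le_of_mem_square hmem hz⟩

theorem stmt17_general (A : Set (EuclideanSpace ℝ (Fin 2))) (δ : ℝ) (hδ : 0 < δ)
    (hA : A ⊆ Metric.ball (0 : EuclideanSpace ℝ (Fin 2)) 1)
    (Z : Set (EuclideanSpace ℝ (Fin 2)))
    (hZD : ∀ z ∈ Z, ‖z‖ < 1)
    -- every square of side `δ/1000` contained in `A_δ` contains a point of `Z`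
    (hsq : ∀ m n : ℤ, square (δ / 1000) m n ⊆ (⋃ a ∈ A, Metric.ball a δ) →
      (Z ∩ square (δ / 1000) m n).Nonempty) :
    ∀ u ∈ A,
      (∃ z ∈ Z, dist u z < δ) ∧
      sInf ((fun z => distH u z) '' Z)
        = sInf ((fun z => distH u z) '' {z ∈ Z | dist u z < δ}) := by
  intro u huA
  have hu : ‖u‖ < 1 := mem_ball_zero_iff.1 (hA huA)
  have near : ∀ p, dist u p ≤ δ / 4 → ∃ z ∈ Z, dist p z ≤ δ / 4 := by
    intro p hp
    have hside : √2 * (δ / 1000) ≤ δ / 4 := by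
      have : √2 ≤ 2 := Real.sqrt_le_iff.2 ⟨zero_le_two, by norm_num⟩
      nlinarith
    have hball : closedBall p (√2 * (δ / 1000)) ⊆ ⋃ a ∈ A, ball a δ := fun q hq => by
      have := dist_triangle q p u
      rw [mem_closedBall] at hq
      rw [dist_comm] at hp
      exact mem_biUnion huA (mem_ball.2 (by linarith))
    obtain ⟨z, hz, hpz⟩ := exists_mem_dist_le_of_forall_square (by positivity) hsq hball
    exact ⟨z, hz, hpz.trans hside⟩
  have closer : ∀ z ∈ Z, ∃ z' ∈ {z ∈ Z | dist u z < δ}, distH u z' ≤ distH u z := by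
    intro z hz
    by_cases hclose : dist u z < δ
    · exact ⟨z, ⟨hz, hclose⟩, le_rfl⟩
    obtain ⟨c, ρ, huc, hzc, hle⟩ := exists_closedBall_distH_le hu (hZD z hz)
    have hρ : δ / 4 ≤ ρ := by
      linarith [not_lt.1 hclose, dist_triangle u c z, mem_closedBall.1 huc, mem_closedBall'.1 hzc]
    obtain ⟨p, hup, hpc⟩ := exists_closedBall_subset_closedBall_dist_le (by positivity) hρ huc
    obtain ⟨z', hz', hpz'⟩ := near p hup
    exact ⟨z', ⟨hz', by linarith [dist_triangle u p z']⟩,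
      hle z' (hpc (mem_closedBall'.2 hpz')) (hZD z' hz')⟩
  obtain ⟨z₀, hz₀, hz₀u⟩ := near u (by rw [dist_self]; positivity)
  have hz₀δ : dist u z₀ < δ := by linarith [dist_comm u z₀]
  exact ⟨⟨z₀, hz₀, hz₀δ⟩, csInf_image_eq_of_forall_exists_le (sep_subset _ _)
    ⟨0, forall_mem_image.2 fun z _ => distH_nonneg u z⟩ ⟨z₀, hz₀, hz₀δ⟩ closer⟩

theorem stmt17 (A : Set (EuclideanSpace ℝ (Fin 2))) (δ : ℝ) (hδ : 0 < δ)
    (hA : A ⊆ Metric.ball (0 : EuclideanSpace ℝ (Fin 2)) 1)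
    (hAδ : (⋃ a ∈ A, Metric.ball a δ) ⊆ Metric.ball (0 : EuclideanSpace ℝ (Fin 2)) 1)
    (Z : Set (EuclideanSpace ℝ (Fin 2)))
    (hZD : ∀ z ∈ Z, ‖z‖ < 1)
    (hloc : ∀ s : Set (EuclideanSpace ℝ (Fin 2)), Bornology.IsBounded s → (Z ∩ s).Finite)
    -- every square of side `δ/1000` contained in `A_δ` contains a point of `Z`
    (hsq : ∀ m n : ℤ, square (δ / 1000) m n ⊆ (⋃ a ∈ A, Metric.ball a δ) →
      (Z ∩ square (δ / 1000) m n).Nonempty) :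
    ∀ u ∈ A,
      (∃ z ∈ Z, dist u z < δ) ∧
      sInf ((fun z => distH u z) '' Z)
        = sInf ((fun z => distH u z) '' {z ∈ Z | dist u z < δ}) :=
  stmt17_general A δ hδ hA Z hZD hsq
end
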